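/- A value v belongs to the intersection over all n ∈ ℕ of the indexed list denotations S n if and only if v is a finite list, i.e., v = fold(right(a1, fold(right(a2, ... fold(right(ak, fold(left ()))) ...)))) for some k ≥ 0 and numeral values a1, ..., ak. -/

import Mathlib

inductive Val : Type
  | unit  : Val
  | zero  : Val
  | tru   : Val
  | fls   : Val
  | succ  : Val → Val
  | fold  : Val → Val
  | left  : Val → Val
  | right : Val → Val
  | pair  : Val → Val → Val
  | lam   : Val
deriving DecidableEq

/-- numeral values: zero, succ zero, ... -/
def isNumeral : Val → Prop
  | Val.zero => True
  | Val.succ v => isNumeral v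
  | _ => False

/-- denotation of the indexed recursive list type `Rec(n)(α ⇒ Unit + ℕ × α)` -/
def S : ℕ → Set Val
  | 0 => { v | ∃ w, v = Val.fold w }
  | n + 1 => { v | v = Val.fold (Val.left Val.unit) ∨
      ∃ a l, isNumeral a ∧ l ∈ S n ∧ v = Val.fold (Val.right (Val.pair a l)) }

/-- the value encoding a finite list of values -/
def mkList : List Val → Val
  | [] => Val.fold (Val.left Val.unit)
  | a :: as => Val.fold (Val.right (Val.pair a (mkList as)))

/-! `S (n + 1)` peels one cons cell off a value and hands its tail to `S n`, so membership in every
`S n` passes to the tail; since values are finite trees, this descent must end at the nil cell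
`fold (left ())`. -/

theorem fold_right_pair_mem_S_succ_iff {a l : Val} {n : ℕ} :
    Val.fold (Val.right (Val.pair a l)) ∈ S (n + 1) ↔ isNumeral a ∧ l ∈ S n := by
  constructor
  · rintro (h | ⟨a', l', ha', hl', h⟩)
    · cases h
    · cases h
      exact ⟨ha', hl'⟩
  · rintro ⟨ha, hl⟩
    exact Or.inr ⟨a, l, ha, hl, rfl⟩

theorem mkList_mem_S {as : List Val} (has : ∀ a ∈ as, isNumeral a) (n : ℕ) : mkList as ∈ S n := by
  induction as generalizing n with
  | nil =>
    cases n
    · exact ⟨_, rfl⟩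
    · exact Or.inl rfl
  | cons a as ih =>
    rw [List.forall_mem_cons] at has
    cases n with
    | zero => exact ⟨_, rfl⟩
    | succ n => exact fold_right_pair_mem_S_succ_iff.2 ⟨has.1, ih has.2 n⟩

theorem exists_mkList_of_forall_mem_S (v : Val) (hv : ∀ n, v ∈ S n) :
    ∃ as : List Val, (∀ a ∈ as, isNumeral a) ∧ v = mkList as := by
  rcases hv 1 with rfl | ⟨a, l, ha, -, rfl⟩
  · exact ⟨[], List.forall_mem_nil _, rfl⟩
  · have hl : ∀ n, l ∈ S n := fun n => (fold_right_pair_mem_S_succ_iff.1 (hv (n + 1))).2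
    obtain ⟨as, has, rfl⟩ := exists_mkList_of_forall_mem_S l hl
    exact ⟨a :: as, List.forall_mem_cons.2 ⟨ha, has⟩, rfl⟩
termination_by v

theorem mem_iInter_S_iff_finite_list (v : Val) :
    v ∈ ⋂ n : ℕ, S n ↔
      ∃ as : List Val, (∀ a ∈ as, isNumeral a) ∧ v = mkList as := by
  rw [Set.mem_iInter]
  constructor
  · exact exists_mkList_of_forall_mem_S v
  · rintro ⟨as, has, rfl⟩
    exact mkList_mem_S has
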